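/- Let (Ω, ℱ, P) be a probability space and let θ, S, Q, Φ, M be random variables on Ω taking values in finite sets. Suppose: (i) Q is independent of θ; (ii) Q is conditionally independent of θ given (S, Φ); and (iii) there exist functions g and h such that M = g(S, Q, Φ) almost surely and (S, Φ) = h(M, Q) almost surely. Then I(θ ; M | Q) = H(θ) − H(θ | S, Φ) ≥ H(θ) − H(θ | S). -/

import Mathlib

open MeasureTheory ProbabilityTheory

/-- Shannon entropy of a finitely-valued random variable `X` under `μ`:
`H(X) = Σ_a (−P(X=a) log P(X=a))`. -/
noncomputable def finEntropy {Ω : Type*} [MeasurableSpace Ω] {α : Type*} [Fintype α]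
    (μ : Measure Ω) (X : Ω → α) : ℝ :=
  ∑ a : α, Real.negMulLog ((μ (X ⁻¹' {a})).toReal)

/-- Conditional Shannon entropy `H(X | Y) = H(X, Y) − H(Y)`. -/
noncomputable def finCondEntropy {Ω : Type*} [MeasurableSpace Ω] {α β : Type*}
    [Fintype α] [Fintype β] (μ : Measure Ω) (X : Ω → α) (Y : Ω → β) : ℝ :=
  finEntropy μ (fun ω => (X ω, Y ω)) - finEntropy μ Y

/-- Conditional mutual information `I(X ; Y | Z) = H(X | Z) − H(X | (Y, Z))`. -/
noncomputable def finCondMutualInfo {Ω : Type*} [MeasurableSpace Ω] {α β γ : Type*}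
    [Fintype α] [Fintype β] [Fintype γ]
    (μ : Measure Ω) (X : Ω → α) (Y : Ω → β) (Z : Ω → γ) : ℝ :=
  finCondEntropy μ X Z - finCondEntropy μ X (fun ω => (Y ω, Z ω))

/-- Mutual information `I(X ; Y) = H(X) − H(X | Y)`. -/
noncomputable def finMutualInfo {Ω : Type*} [MeasurableSpace Ω] {α β : Type*}
    [Fintype α] [Fintype β] (μ : Measure Ω) (X : Ω → α) (Y : Ω → β) : ℝ :=
  finEntropy μ X - finCondEntropy μ X Y

/-! Write `R = (S, Φ)`. Independence gives `H(θ | Q) = H(θ)`; since `(M, Q)` and `(R, Q)` determine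
each other almost surely, `H(θ | M, Q) = H(θ | R, Q)`; and conditional independence of `θ` and `Q`
given `R` gives `H(θ | R, Q) = H(θ | R)`. The inequality is "conditioning reduces entropy",
`H(θ | S, Φ) ≤ H(θ | S)`. Both of the last two facts come from writing `I(X ; Z | Y)` as
`∑ p(x,y,z) log (p(x,y,z) p(y) / (p(x,y) p(y,z)))`, which vanishes under conditional independence
and is nonnegative by Gibbs' inequality. -/

section Weights

open Real

variable {ι α β γ : Type*} [Fintype α] [Fintype γ]

theorem Real.negMulLog_sum (s : Finset ι) (f : ι → ℝ) :
    negMulLog (∑ i ∈ s, f i) = ∑ i ∈ s, -f i * log (∑ j ∈ s, f j) := by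
  rw [negMulLog, ← Finset.sum_neg_distrib, Finset.sum_mul]

theorem mul_log_mul_div_mul_eq {p a b c : ℝ} (hp : 0 ≤ p) (ha : p ≤ a) (hb : p ≤ b)
    (hc : p ≤ c) :
    p * log (p * c / (a * b)) = -p * log a + -p * log b - negMulLog p - -p * log c := by
  rcases hp.eq_or_lt with rfl | hp
  · simp
  have ha := hp.trans_le ha
  have hb := hp.trans_le hb
  have hc := hp.trans_le hc
  rw [log_div (by positivity) (by positivity), log_mul hp.ne' hc.ne',
    log_mul ha.ne' hb.ne', negMulLog]
  ring

theorem sub_le_mul_log_mul_div_mul {p a b c : ℝ} (hp : 0 ≤ p) (ha : p ≤ a) (hb : p ≤ b)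
    (hc : p ≤ c) : p - a * b / c ≤ p * log (p * c / (a * b)) := by
  rcases hp.eq_or_lt with rfl | hp
  · simp only [zero_sub, zero_mul, neg_nonpos]
    positivity
  have ha := hp.trans_le ha
  have hb := hp.trans_le hb
  have hc := hp.trans_le hc
  have hlog := one_sub_inv_le_log_of_pos (x := p * c / (a * b)) (by positivity)
  calc p - a * b / c = p * (1 - (p * c / (a * b))⁻¹) := by field_simp
    _ ≤ p * log (p * c / (a * b)) := by gcongr

theorem weight_le_marginals {p : α → β → γ → ℝ} (hp : ∀ x y z, 0 ≤ p x y z)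
    (x : α) (y : β) (z : γ) :
    p x y z ≤ ∑ z', p x y z' ∧ p x y z ≤ ∑ x', p x' y z ∧
      p x y z ≤ ∑ x', ∑ z', p x' y z' := by
  have hxy : p x y z ≤ ∑ z', p x y z' :=
    Finset.single_le_sum (fun z' _ => hp x y z') (Finset.mem_univ z)
  refine ⟨hxy, Finset.single_le_sum (fun x' _ => hp x' y z) (Finset.mem_univ x), ?_⟩
  exact hxy.trans <| Finset.single_le_sum (f := fun x' => ∑ z', p x' y z')
    (fun x' _ => Finset.sum_nonneg fun z' _ => hp x' y z') (Finset.mem_univ x)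

variable [Fintype β]

/-- `I(X ; Z | Y)` computed from the joint weights `p x y z` of `(X, Y, Z)`. -/
noncomputable def condMutualInfoOfWeights (p : α → β → γ → ℝ) : ℝ :=
  ∑ x, ∑ y, ∑ z, p x y z *
    log (p x y z * (∑ x', ∑ z', p x' y z') / ((∑ z', p x y z') * ∑ x', p x' y z))

variable {p : α → β → γ → ℝ}

theorem condMutualInfoOfWeights_eq (hp : ∀ x y z, 0 ≤ p x y z) :
    condMutualInfoOfWeights p
      = (∑ x, ∑ y, negMulLog (∑ z, p x y z)) + (∑ y, ∑ z, negMulLog (∑ x, p x y z))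
        - (∑ x, ∑ y, ∑ z, negMulLog (p x y z)) - ∑ y, negMulLog (∑ x, ∑ z, p x y z) := by
  have hxy : ∑ x, ∑ y, negMulLog (∑ z, p x y z)
      = ∑ x, ∑ y, ∑ z, -p x y z * log (∑ z', p x y z') := by
    simp only [negMulLog_sum]
  have hyz : ∑ y, ∑ z, negMulLog (∑ x, p x y z)
      = ∑ x, ∑ y, ∑ z, -p x y z * log (∑ x', p x' y z) := by
    simp only [negMulLog_sum]
    rw [Finset.sum_comm_cycle]
  have hy : ∑ y, negMulLog (∑ x, ∑ z, p x y z)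
      = ∑ x, ∑ y, ∑ z, -p x y z * log (∑ x', ∑ z', p x' y z') := by
    simp only [negMulLog_sum, neg_mul, ← Finset.sum_neg_distrib, Finset.sum_mul]
    exact Finset.sum_comm
  rw [hxy, hyz, hy, condMutualInfoOfWeights]
  simp only [← Finset.sum_add_distrib, ← Finset.sum_sub_distrib]
  refine Finset.sum_congr rfl fun x _ => Finset.sum_congr rfl fun y _ =>
    Finset.sum_congr rfl fun z _ => ?_
  obtain ⟨hxy, hyz, hy⟩ := weight_le_marginals hp x y z
  exact mul_log_mul_div_mul_eq (hp x y z) hxy hyz hy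

theorem condMutualInfoOfWeights_nonneg (hp : ∀ x y z, 0 ≤ p x y z) :
    0 ≤ condMutualInfoOfWeights p := by
  -- Gibbs: `p log (p / q) ≥ p - q` for `q(x,y,z) = p(x,y) p(y,z) / p(y)`, which has the
  -- same mass as `p` on each fibre `Y = y`.
  set q : α → β → γ → ℝ := fun x y z =>
    (∑ z', p x y z') * (∑ x', p x' y z) / ∑ x', ∑ z', p x' y z'
  have hq : ∀ y, ∑ x, ∑ z, q x y z = ∑ x, ∑ z, p x y z := fun y => by
    simp only [q, ← Finset.sum_div, ← Finset.mul_sum, ← Finset.sum_mul]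
    rw [Finset.sum_comm (f := fun z x => p x y z), mul_self_div_self]
  calc (0 : ℝ) = ∑ x, ∑ y, ∑ z, (p x y z - q x y z) := by
        simp only [Finset.sum_sub_distrib]
        rw [Finset.sum_comm (f := fun x y => ∑ z, q x y z),
          Finset.sum_comm (f := fun x y => ∑ z, p x y z)]
        simp only [hq, sub_self]
    _ ≤ condMutualInfoOfWeights p :=
      Finset.sum_le_sum fun x _ => Finset.sum_le_sum fun y _ => Finset.sum_le_sum fun z _ =>
        have ⟨hxy, hyz, hy⟩ := weight_le_marginals hp x y z
        sub_le_mul_log_mul_div_mul (hp x y z) hxy hyz hy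

theorem condMutualInfoOfWeights_eq_zero
    (hci : ∀ x y z, p x y z * ∑ x', ∑ z', p x' y z' = (∑ z', p x y z') * ∑ x', p x' y z) :
    condMutualInfoOfWeights p = 0 :=
  Finset.sum_eq_zero fun x _ => Finset.sum_eq_zero fun y _ => Finset.sum_eq_zero fun z _ => by
    rw [hci]
    rcases eq_or_ne ((∑ z', p x y z') * ∑ x', p x' y z) 0 with h | h <;> simp [h]

end Weights

theorem Set.preimage_prodMk_singleton {Ω α β : Type*} (X : Ω → α) (Y : Ω → β) (a : α) (b : β) :
    (fun ω => (X ω, Y ω)) ⁻¹' {(a, b)} = X ⁻¹' {a} ∩ Y ⁻¹' {b} := by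
  rw [← Set.singleton_prod_singleton, Set.mk_preimage_prod]

section FinEntropy

open Real

variable {Ω α β : Type*} [MeasurableSpace Ω] {μ : Measure Ω} [Fintype α] [Fintype β]

theorem finEntropy_congr_ae {X Y : Ω → α} (h : X =ᵐ[μ] Y) :
    finEntropy μ X = finEntropy μ Y := by
  simp only [finEntropy, measure_congr (h.preimage _)]

theorem finEntropy_comp_equiv (e : α ≃ β) (X : Ω → α) :
    finEntropy μ (e ∘ X) = finEntropy μ X := by
  simp only [finEntropy]
  refine Fintype.sum_equiv e.symm _ _ fun b => ?_
  have hfibre : e ⁻¹' {b} = {e.symm b} := by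
    ext a
    simp [Equiv.eq_symm_apply]
  rw [Set.preimage_comp, hfibre]

theorem finEntropy_prodMk (X : Ω → α) (Y : Ω → β) :
    finEntropy μ (fun ω => (X ω, Y ω))
      = ∑ a, ∑ b, negMulLog (μ.real (X ⁻¹' {a} ∩ Y ⁻¹' {b})) := by
  simp only [finEntropy, Fintype.sum_prod_type, Set.preimage_prodMk_singleton, measureReal_def]

theorem finEntropy_prodMk_comp (X : Ω → α) (f : α → β) :
    finEntropy μ (fun ω => (X ω, f (X ω))) = finEntropy μ X := by
  classical
  have hfibre : ∀ a b, X ⁻¹' {a} ∩ (fun ω => f (X ω)) ⁻¹' {b}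
      = if f a = b then X ⁻¹' {a} else ∅ := by
    intro a b
    ext ω
    split_ifs with hab <;> simp +contextual [hab]
  rw [finEntropy_prodMk]
  simp only [hfibre, apply_ite, measureReal_empty, negMulLog_zero, Finset.sum_ite_eq,
    Finset.mem_univ, if_true]
  rfl

theorem finEntropy_eq_of_ae_eq_comp {X : Ω → α} {Y : Ω → β} (f : α → β) (g : β → α)
    (hY : Y =ᵐ[μ] f ∘ X) (hX : X =ᵐ[μ] g ∘ Y) : finEntropy μ X = finEntropy μ Y :=
  calc finEntropy μ X = finEntropy μ (fun ω => (X ω, f (X ω))) := (finEntropy_prodMk_comp X f).symm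
    _ = finEntropy μ (fun ω => (X ω, Y ω)) := finEntropy_congr_ae <| by
        filter_upwards [hY] with ω hω using by rw [hω]; rfl
    _ = finEntropy μ (fun ω => (Y ω, X ω)) :=
        (finEntropy_comp_equiv (Equiv.prodComm α β) fun ω => (X ω, Y ω)).symm
    _ = finEntropy μ (fun ω => (Y ω, g (Y ω))) := finEntropy_congr_ae <| by
        filter_upwards [hX] with ω hω using by rw [hω]; rfl
    _ = finEntropy μ Y := finEntropy_prodMk_comp Y g

end FinEntropy

section Measurable

open Real

variable {Ω α β γ : Type*} [MeasurableSpace Ω] {μ : Measure Ω}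
  [MeasurableSpace α] [MeasurableSingletonClass α]
  [MeasurableSpace β] [MeasurableSingletonClass β]
  [MeasurableSpace γ] [MeasurableSingletonClass γ]

theorem sum_measureReal_preimage_singleton_inter [Fintype α] [IsFiniteMeasure μ] {X : Ω → α}
    (hX : Measurable X) {A : Set Ω} (hA : MeasurableSet A) :
    ∑ a, μ.real (X ⁻¹' {a} ∩ A) = μ.real A := by
  simp only [← measureReal_restrict_apply' hA]
  rw [sum_measureReal_preimage_singleton _ fun a _ => hX (measurableSet_singleton a),
    Finset.coe_univ, Set.preimage_univ, measureReal_restrict_apply_univ]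

theorem sum_measureReal_preimage_singleton_eq_one [Fintype α] [IsProbabilityMeasure μ]
    {X : Ω → α} (hX : Measurable X) : ∑ a, μ.real (X ⁻¹' {a}) = 1 := by
  simpa using sum_measureReal_preimage_singleton_inter (μ := μ) hX MeasurableSet.univ

theorem finEntropy_prodMk_of_indepFun [Fintype α] [Fintype β] [IsProbabilityMeasure μ]
    {X : Ω → α} {Y : Ω → β} (hX : Measurable X) (hY : Measurable Y) (hXY : IndepFun X Y μ) :
    finEntropy μ (fun ω => (X ω, Y ω)) = finEntropy μ X + finEntropy μ Y := by
  have hprod : ∀ a b,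
      μ.real (X ⁻¹' {a} ∩ Y ⁻¹' {b}) = μ.real (X ⁻¹' {a}) * μ.real (Y ⁻¹' {b}) := fun a b => by
      simp only [measureReal_def, hXY.measure_inter_preimage_eq_mul _ _
        (measurableSet_singleton a) (measurableSet_singleton b), ENNReal.toReal_mul]
  simp only [finEntropy_prodMk, hprod, negMulLog_mul, Finset.sum_add_distrib, ← Finset.mul_sum,
    ← Finset.sum_mul, sum_measureReal_preimage_singleton_eq_one hX,
    sum_measureReal_preimage_singleton_eq_one hY, one_mul]
  rfl

noncomputable def jointWeights (μ : Measure Ω) (X : Ω → α) (Y : Ω → β) (Z : Ω → γ) :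
    α → β → γ → ℝ :=
  fun x y z => μ.real (X ⁻¹' {x} ∩ (Y ⁻¹' {y} ∩ Z ⁻¹' {z}))

variable {X : Ω → α} {Y : Ω → β} {Z : Ω → γ}

theorem sum_jointWeights_left [Fintype α] [IsFiniteMeasure μ] (hX : Measurable X)
    (hY : Measurable Y) (hZ : Measurable Z) (y : β) (z : γ) :
    ∑ x, jointWeights μ X Y Z x y z = μ.real (Y ⁻¹' {y} ∩ Z ⁻¹' {z}) :=
  sum_measureReal_preimage_singleton_inter hX
    ((hY (measurableSet_singleton y)).inter (hZ (measurableSet_singleton z)))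

theorem sum_jointWeights_right [Fintype γ] [IsFiniteMeasure μ] (hX : Measurable X)
    (hY : Measurable Y) (hZ : Measurable Z) (x : α) (y : β) :
    ∑ z, jointWeights μ X Y Z x y z = μ.real (X ⁻¹' {x} ∩ Y ⁻¹' {y}) := by
  simp only [jointWeights, Set.inter_comm (Y ⁻¹' _), Set.inter_left_comm (X ⁻¹' _)]
  exact sum_measureReal_preimage_singleton_inter hZ
    ((hX (measurableSet_singleton x)).inter (hY (measurableSet_singleton y)))

variable [Fintype α] [Fintype β] [Fintype γ] [IsFiniteMeasure μ]

theorem finEntropy_sub_eq_condMutualInfoOfWeights (hX : Measurable X) (hY : Measurable Y)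
    (hZ : Measurable Z) :
    finEntropy μ (fun ω => (X ω, Y ω)) + finEntropy μ (fun ω => (Y ω, Z ω))
        - finEntropy μ (fun ω => (X ω, (Y ω, Z ω))) - finEntropy μ Y
      = condMutualInfoOfWeights (jointWeights μ X Y Z) := by
  have hy : ∀ y, ∑ x, μ.real (X ⁻¹' {x} ∩ Y ⁻¹' {y}) = μ.real (Y ⁻¹' {y}) := fun y =>
    sum_measureReal_preimage_singleton_inter hX (hY (measurableSet_singleton y))
  rw [condMutualInfoOfWeights_eq (p := jointWeights μ X Y Z) fun _ _ _ => measureReal_nonneg]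
  simp only [sum_jointWeights_left hX hY hZ, sum_jointWeights_right hX hY hZ, hy,
    finEntropy_prodMk, Fintype.sum_prod_type, Set.preimage_prodMk_singleton]
  rfl

theorem finEntropy_submodular (hX : Measurable X) (hY : Measurable Y) (hZ : Measurable Z) :
    finEntropy μ (fun ω => (X ω, (Y ω, Z ω))) + finEntropy μ Y
      ≤ finEntropy μ (fun ω => (X ω, Y ω)) + finEntropy μ (fun ω => (Y ω, Z ω)) := by
  have := condMutualInfoOfWeights_nonneg (p := jointWeights μ X Y Z)
    fun _ _ _ => measureReal_nonneg
  linarith [finEntropy_sub_eq_condMutualInfoOfWeights (μ := μ) hX hY hZ]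

theorem finEntropy_add_eq_of_condIndep (hX : Measurable X) (hY : Measurable Y) (hZ : Measurable Z)
    (hXZ : ∀ x y z, μ (Z ⁻¹' {z} ∩ X ⁻¹' {x} ∩ Y ⁻¹' {y}) * μ (Y ⁻¹' {y})
      = μ (Z ⁻¹' {z} ∩ Y ⁻¹' {y}) * μ (X ⁻¹' {x} ∩ Y ⁻¹' {y})) :
    finEntropy μ (fun ω => (X ω, (Y ω, Z ω))) + finEntropy μ Y
      = finEntropy μ (fun ω => (X ω, Y ω)) + finEntropy μ (fun ω => (Y ω, Z ω)) := by
  have hzero : condMutualInfoOfWeights (jointWeights μ X Y Z) = 0 := by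
    refine condMutualInfoOfWeights_eq_zero fun x y z => ?_
    have hy : ∑ x, ∑ z, jointWeights μ X Y Z x y z = μ.real (Y ⁻¹' {y}) := by
      simp only [sum_jointWeights_right hX hY hZ]
      exact sum_measureReal_preimage_singleton_inter hX (hY (measurableSet_singleton y))
    have hset : Z ⁻¹' {z} ∩ X ⁻¹' {x} ∩ Y ⁻¹' {y} = X ⁻¹' {x} ∩ (Y ⁻¹' {y} ∩ Z ⁻¹' {z}) := by
      ext ω
      simp only [Set.mem_inter_iff]
      tauto
    have h := congrArg ENNReal.toReal (hXZ x y z)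
    rw [ENNReal.toReal_mul, ENNReal.toReal_mul, hset, Set.inter_comm (Z ⁻¹' _)] at h
    rw [hy, sum_jointWeights_left hX hY hZ, sum_jointWeights_right hX hY hZ]
    exact h.trans (mul_comm _ _)
  linarith [finEntropy_sub_eq_condMutualInfoOfWeights (μ := μ) hX hY hZ]

end Measurable

theorem mmcf_information_contribution_general
    {Ω : Type*} [MeasurableSpace Ω] (μ : Measure Ω) [IsProbabilityMeasure μ]
    {αθ αS αQ αΦ αM : Type*}
    [Fintype αθ] [Fintype αS] [Fintype αQ] [Fintype αΦ] [Fintype αM]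
    [MeasurableSpace αθ] [MeasurableSingletonClass αθ]
    [MeasurableSpace αS] [MeasurableSingletonClass αS]
    [MeasurableSpace αQ] [MeasurableSingletonClass αQ]
    [MeasurableSpace αΦ] [MeasurableSingletonClass αΦ]
    (θf : Ω → αθ) (S : Ω → αS) (Q : Ω → αQ) (Φ : Ω → αΦ) (M : Ω → αM)
    (hθ : Measurable θf) (hS : Measurable S) (hQ : Measurable Q)
    (hΦ : Measurable Φ)
    (hindep : IndepFun Q θf μ)
    (hcondindep : ∀ (q : αQ) (t : αθ) (s : αS) (f : αΦ),
      μ (Q ⁻¹' {q} ∩ θf ⁻¹' {t} ∩ (S ⁻¹' {s} ∩ Φ ⁻¹' {f}))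
          * μ (S ⁻¹' {s} ∩ Φ ⁻¹' {f})
        = μ (Q ⁻¹' {q} ∩ (S ⁻¹' {s} ∩ Φ ⁻¹' {f}))
          * μ (θf ⁻¹' {t} ∩ (S ⁻¹' {s} ∩ Φ ⁻¹' {f})))
    (g : αS × αQ × αΦ → αM) (h : αM × αQ → αS × αΦ)
    (hg : ∀ᵐ ω ∂μ, M ω = g (S ω, Q ω, Φ ω))
    (hh : ∀ᵐ ω ∂μ, (S ω, Φ ω) = h (M ω, Q ω)) :
    finCondMutualInfo μ θf M Q
        = finEntropy μ θf - finCondEntropy μ θf (fun ω => (S ω, Φ ω))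
      ∧ finEntropy μ θf - finCondEntropy μ θf S
        ≤ finEntropy μ θf - finCondEntropy μ θf (fun ω => (S ω, Φ ω)) := by
  have hθQ := finEntropy_prodMk_of_indepFun hθ hQ hindep.symm
  have hθMQ : finEntropy μ (fun ω => (θf ω, (M ω, Q ω)))
      = finEntropy μ (fun ω => (θf ω, ((S ω, Φ ω), Q ω))) :=
    finEntropy_eq_of_ae_eq_comp (fun a => (a.1, h a.2, a.2.2))
      (fun a => (a.1, g (a.2.1.1, a.2.2, a.2.1.2), a.2.2))
      (by filter_upwards [hh] with ω hω using by simp [hω])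
      (by filter_upwards [hg] with ω hω using by simp [hω])
  have hMQ : finEntropy μ (fun ω => (M ω, Q ω)) = finEntropy μ (fun ω => ((S ω, Φ ω), Q ω)) :=
    finEntropy_eq_of_ae_eq_comp (fun a => (h a, a.2)) (fun a => (g (a.1.1, a.2, a.1.2), a.2))
      (by filter_upwards [hh] with ω hω using by simp [hω])
      (by filter_upwards [hg] with ω hω using by simp [hω])
  have hcond := finEntropy_add_eq_of_condIndep hθ (hS.prodMk hΦ) hQ
    fun t ⟨s, f⟩ q => by simpa only [Set.preimage_prodMk_singleton] using hcondindep q t s f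
  have hsub := finEntropy_submodular (μ := μ) hθ hS hΦ
  constructor <;> simp only [finCondMutualInfo, finCondEntropy] <;> linarith

/-- **MMCF (MetaMix + Channel Shuffle) contributes at least as much information as MetaMix.**
If (i) `Q` is independent of `θ`, (ii) `Q` is conditionally independent of `θ` given
`(S, Φ)` (stated elementarily on atoms), and (iii) `M = g(S, Q, Φ)` a.s. with
`(S, Φ) = h(M, Q)` a.s., then
`I(θ ; M | Q) = H(θ) − H(θ | (S, Φ)) ≥ H(θ) − H(θ | S)`. -/
theorem mmcf_information_contribution
    {Ω : Type*} [MeasurableSpace Ω] (μ : Measure Ω) [IsProbabilityMeasure μ]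
    {αθ αS αQ αΦ αM : Type*}
    [Fintype αθ] [Fintype αS] [Fintype αQ] [Fintype αΦ] [Fintype αM]
    [MeasurableSpace αθ] [MeasurableSingletonClass αθ]
    [MeasurableSpace αS] [MeasurableSingletonClass αS]
    [MeasurableSpace αQ] [MeasurableSingletonClass αQ]
    [MeasurableSpace αΦ] [MeasurableSingletonClass αΦ]
    [MeasurableSpace αM] [MeasurableSingletonClass αM]
    (θf : Ω → αθ) (S : Ω → αS) (Q : Ω → αQ) (Φ : Ω → αΦ) (M : Ω → αM)
    (hθ : Measurable θf) (hS : Measurable S) (hQ : Measurable Q)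
    (hΦ : Measurable Φ) (hM : Measurable M)
    (hindep : IndepFun Q θf μ)
    (hcondindep : ∀ (q : αQ) (t : αθ) (s : αS) (f : αΦ),
      μ (Q ⁻¹' {q} ∩ θf ⁻¹' {t} ∩ (S ⁻¹' {s} ∩ Φ ⁻¹' {f}))
          * μ (S ⁻¹' {s} ∩ Φ ⁻¹' {f})
        = μ (Q ⁻¹' {q} ∩ (S ⁻¹' {s} ∩ Φ ⁻¹' {f}))
          * μ (θf ⁻¹' {t} ∩ (S ⁻¹' {s} ∩ Φ ⁻¹' {f})))
    (g : αS × αQ × αΦ → αM) (h : αM × αQ → αS × αΦ)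
    (hg : ∀ᵐ ω ∂μ, M ω = g (S ω, Q ω, Φ ω))
    (hh : ∀ᵐ ω ∂μ, (S ω, Φ ω) = h (M ω, Q ω)) :
    finCondMutualInfo μ θf M Q
        = finEntropy μ θf - finCondEntropy μ θf (fun ω => (S ω, Φ ω))
      ∧ finEntropy μ θf - finCondEntropy μ θf S
        ≤ finEntropy μ θf - finCondEntropy μ θf (fun ω => (S ω, Φ ω)) :=
  mmcf_information_contribution_general μ θf S Q Φ M hθ hS hQ hΦ hindep hcondindep g h hg hh
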